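/- Assume the setup, the stability assumption, and the γ-feasibility assumption, and let γ ∈ [γ_min, γ_max]. Then for every tangent space T' = T(L') at a rank-r symmetric matrix L' with ρ(T, T') ≤ ξ(T)/2, writing Y = Ω × T', the minimum gain of H* restricted to Ω ⊕ T' is bounded below: for all (M, N) ∈ Ω × T', ‖P_Y D H*(M+N)‖_γ ≥ (α/2) ‖(M,N)‖_γ. -/

import Mathlib

/-!
The block operator `(M, N) ↦ (P_Ω H*(M + N), P_{T'} H*(M + N))` on `Ω × T'` has diagonal blocks
with gain at least `α` and off-diagonal blocks that are small in the mixed norms: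
`‖P_Ω H* N‖_∞ ≤ β ‖N‖_∞ ≤ 2βξ(T) ‖N‖`, because `ρ(T, T') ≤ ξ(T)/2` keeps the elements of `T'` almost
as incoherent as those of `T`, and `‖P_{T'} H* M‖ ≤ 2 ‖H* M‖ ≤ 2βμ(Ω) ‖M‖_∞`, because the
projection onto a tangent space at most doubles the spectral norm. For `γ` in
`[γ_min, γ_max]` each cross term is at most half the diagonal gain in the `γ`-norm, whichever
of the two components realises the maximum in `‖(M, N)‖_γ`.
-/

noncomputable section

open scoped BigOperators
open Matrix

namespace IsingSL

/-- The space of real `d × d` matrices.  Symmetry (membership in `Sym(d)`) is imposed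
through explicit hypotheses `Matrix.IsSymm`. -/
abbrev Mat (d : ℕ) := Matrix (Fin d) (Fin d) ℝ

/-- The trace inner product `⟨A, B⟩ = tr(Aᵀ B)`. -/
def minner {d : ℕ} (A B : Mat d) : ℝ := (Aᵀ * B).trace

/-- Entrywise `ℓ∞`-norm of a matrix. -/
def normInf {d : ℕ} (M : Mat d) : ℝ := ⨆ p : Fin d × Fin d, |M p.1 p.2|

/-- Entrywise `ℓ1`-norm of a matrix. -/
def norm1 {d : ℕ} (M : Mat d) : ℝ := ∑ i, ∑ j, |M i j|

/-- Euclidean norm of a vector. -/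
def vnorm {d : ℕ} (v : Fin d → ℝ) : ℝ := Real.sqrt (∑ i, v i ^ 2)

/-- Spectral norm (`ℓ2`-operator norm) of a matrix. -/
def specNorm {d : ℕ} (M : Mat d) : ℝ :=
  sSup {t | ∃ v : Fin d → ℝ, vnorm v ≤ 1 ∧ t = vnorm (M.mulVec v)}

/-- Nuclear norm of a matrix (sum of singular values), characterized via
trace duality with the spectral norm. -/
def nucNorm {d : ℕ} (M : Mat d) : ℝ :=
  sSup {t | ∃ B : Mat d, specNorm B ≤ 1 ∧ t = minner M B}

/-- The `γ`-norm of a pair of matrices: `‖(S, L)‖_γ = max {‖S‖_∞/γ, ‖L‖}`. -/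
def ganorm {d : ℕ} (γ : ℝ) (S L : Mat d) : ℝ := max (normInf S / γ) (specNorm L)

/-- The `{0,1}`-vector corresponding to `x : Fin d → Bool`. -/
def b2r {d : ℕ} (x : Fin d → Bool) : Fin d → ℝ := fun i => if x i then 1 else 0

/-- The sufficient statistics `Φ(x) = x xᵀ` for `x ∈ {0,1}^d`. -/
def phi {d : ℕ} (x : Fin d → Bool) : Mat d := Matrix.of fun i j => b2r x i * b2r x j

/-- The log-partition function `a(Θ)` of the pairwise Ising model. -/
def logA {d : ℕ} (Θ : Mat d) : ℝ :=
  Real.log (∑ x : Fin d → Bool, Real.exp (minner Θ (phi x)))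

/-- The Ising probability mass function `p(x) = exp(⟨Θ, Φ(x)⟩ - a(Θ))`. -/
def isingPMF {d : ℕ} (Θ : Mat d) (x : Fin d → Bool) : ℝ :=
  Real.exp (minner Θ (phi x) - logA Θ)

/-- `Φ* = E_Θ[Φ]`, the expected sufficient statistics; this is the gradient `∇a(Θ)`
of the log-partition function w.r.t. the trace inner product. -/
def meanPhi {d : ℕ} (Θ : Mat d) : Mat d := ∑ x : Fin d → Bool, isingPMF Θ x • phi x

/-- The Hessian `∇²a(Θ)` of the log-partition function as a linear operator on matrices;
it is the covariance operator `M ↦ E[⟨Φ,M⟩Φ] - ⟨E[Φ],M⟩E[Φ]` of the sufficient statistics. -/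
def hessA {d : ℕ} (Θ : Mat d) (M : Mat d) : Mat d :=
  (∑ x : Fin d → Bool, (isingPMF Θ x * minner (phi x) M) • phi x)
    - minner (meanPhi Θ) M • meanPhi Θ

/-- The empirical second-moment matrix `Φ^n` of a sample. -/
def empPhi {d n : ℕ} (xs : Fin n → (Fin d → Bool)) : Mat d :=
  (n : ℝ)⁻¹ • ∑ k, phi (xs k)

/-- The negative log-likelihood `ℓ(Θ) = a(Θ) - ⟨Θ, Φ^n⟩`. -/
def nll {d : ℕ} (Phin Θ : Mat d) : ℝ := logA Θ - minner Θ Phin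

/-- The probability of the event `E` under `n` i.i.d. samples from the Ising
distribution with parameter `Θ`. -/
def samplesProb {d : ℕ} (Θ : Mat d) (n : ℕ) (E : Set (Fin n → (Fin d → Bool))) : ℝ :=
  ∑ xs : Fin n → (Fin d → Bool), E.indicator (fun ys => ∏ k, isingPMF Θ (ys k)) xs

/-- Probability vectors on `{0,1}^d`. -/
def IsProbVec {d : ℕ} (p : (Fin d → Bool) → ℝ) : Prop :=
  (∀ x, 0 ≤ p x) ∧ ∑ x : Fin d → Bool, p x = 1

/-- The (Shannon) entropy `H(p) = -Σ_x p(x) log p(x)` (with `0 log 0 = 0`). -/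
def entropy {d : ℕ} (p : (Fin d → Bool) → ℝ) : ℝ :=
  -∑ x : Fin d → Bool, p x * Real.log (p x)

/-- The expectation `E_p[Φ]` of the sufficient statistics under `p`. -/
def Ephi {d : ℕ} (p : (Fin d → Bool) → ℝ) : Mat d :=
  ∑ x : Fin d → Bool, p x • phi x

/-- The linear identification of `d × d` matrices with the euclidean space on `d·d`
coordinates; under this identification the euclidean inner product corresponds to the
trace inner product on matrices. -/
def matEuclid (d : ℕ) : Mat d ≃ₗ[ℝ] EuclideanSpace ℝ (Fin d × Fin d) where
  toFun M := WithLp.toLp 2 (fun p => M p.1 p.2)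
  invFun v := Matrix.of fun i j => v (i, j)
  map_add' _ _ := rfl
  map_smul' _ _ := rfl
  left_inv _ := rfl
  right_inv _ := rfl

/-- Orthogonal projection onto a subspace `V` of `Mat d`, w.r.t. the trace inner product. -/
def proj {d : ℕ} (V : Submodule ℝ (Mat d)) (M : Mat d) : Mat d :=
  (matEuclid d).symm
    ((Submodule.orthogonalProjectionOnto (V.map ((matEuclid d) : Mat d →ₗ[ℝ] EuclideanSpace ℝ (Fin d × Fin d)))
      ((matEuclid d) M) : EuclideanSpace ℝ (Fin d × Fin d)))

/-- Projection onto the orthogonal complement of `V`. -/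
def projPerp {d : ℕ} (V : Submodule ℝ (Mat d)) (M : Mat d) : Mat d := M - proj V M

/-- The twisting `ρ(T, T') = max_{‖M‖=1} ‖(P_T - P_{T'}) M‖` between two subspaces. -/
def rho {d : ℕ} (T T' : Submodule ℝ (Mat d)) : ℝ :=
  sSup {t | ∃ M : Mat d, specNorm M = 1 ∧ t = specNorm (proj T M - proj T' M)}

/-- `ξ(T)`: the smallest `ξ` with `‖M‖_∞ ≤ ξ ‖M‖` for all `M ∈ T`. -/
def xi {d : ℕ} (T : Submodule ℝ (Mat d)) : ℝ :=
  sInf {c | ∀ M ∈ T, normInf M ≤ c * specNorm M}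

/-- `μ(Ω)`: the smallest `μ` with `‖N‖ ≤ μ ‖N‖_∞` for all `N ∈ Ω`. -/
def mu {d : ℕ} (Om : Submodule ℝ (Mat d)) : ℝ :=
  sInf {c | ∀ N ∈ Om, specNorm N ≤ c * normInf N}

/-- `Ω(S) = {M ∈ Sym(d) : supp(M) ⊆ supp(S)}`, the tangent space at `S` to the variety
of symmetric matrices with at most `|supp S|` nonzero entries. -/
def OmegaS {d : ℕ} (S : Mat d) : Submodule ℝ (Mat d) where
  carrier := {M | M.IsSymm ∧ ∀ i j, S i j = 0 → M i j = 0}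
  add_mem' := by
    rintro a b ⟨ha, ha0⟩ ⟨hb, hb0⟩
    refine ⟨?_, fun i j h => ?_⟩
    · show (a + b)ᵀ = a + b
      rw [Matrix.transpose_add, ha, hb]
    · show a i j + b i j = 0
      rw [ha0 i j h, hb0 i j h, add_zero]
  zero_mem' := by
    refine ⟨?_, fun i j _ => rfl⟩
    show (0 : Mat _)ᵀ = 0
    rw [Matrix.transpose_zero]
  smul_mem' := by
    rintro c a ⟨ha, ha0⟩
    refine ⟨?_, fun i j h => ?_⟩
    · show (c • a)ᵀ = c • a
      rw [Matrix.transpose_smul, ha]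
    · show c * a i j = 0
      rw [ha0 i j h, mul_zero]

/-- `T(L) = {U Xᵀ + X Uᵀ : X ∈ ℝ^{d×r}}`, the tangent space at `L = U D Uᵀ` to the
variety of symmetric matrices of rank at most `r`. -/
def TSpace {d r : ℕ} (U : Matrix (Fin d) (Fin r) ℝ) : Submodule ℝ (Mat d) where
  carrier := {M | ∃ X : Matrix (Fin d) (Fin r) ℝ, M = U * Xᵀ + X * Uᵀ}
  add_mem' := by
    rintro a b ⟨X, rfl⟩ ⟨Y, rfl⟩
    exact ⟨X + Y, by rw [Matrix.transpose_add, Matrix.mul_add, Matrix.add_mul]; abel⟩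
  zero_mem' := ⟨0, by simp⟩
  smul_mem' := by
    rintro c a ⟨X, rfl⟩
    exact ⟨c • X, by rw [Matrix.transpose_smul, Matrix.mul_smul, Matrix.smul_mul, smul_add]⟩

/-- `T'` is the tangent space `T(L')` at some rank-`r` symmetric matrix
`L' = U D Uᵀ` (restricted eigenvalue decomposition: `U` with orthonormal columns,
`D` invertible diagonal). -/
def IsTangentSpace (d r : ℕ) (T' : Submodule ℝ (Mat d)) : Prop :=
  ∃ (U : Matrix (Fin d) (Fin r) ℝ) (D : Matrix (Fin r) (Fin r) ℝ),
    Uᵀ * U = 1 ∧ D.IsDiag ∧ IsUnit D.det ∧ T' = TSpace U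

/-- A solution of the tangent-space constrained problem
`min_{(S,L) ∈ Om × T'} ℓ(S+L) + λ(γ‖S‖₁ + ‖L‖_*)`. -/
def IsYSol {d : ℕ} (Om T' : Submodule ℝ (Mat d)) (Phin : Mat d) (lam γ : ℝ)
    (p : Mat d × Mat d) : Prop :=
  p.1 ∈ Om ∧ p.2 ∈ T' ∧
    ∀ q : Mat d × Mat d, q.1 ∈ Om → q.2 ∈ T' →
      nll Phin (p.1 + p.2) + lam * (γ * norm1 p.1 + nucNorm p.2) ≤
        nll Phin (q.1 + q.2) + lam * (γ * norm1 q.1 + nucNorm q.2)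

/-- A solution of the convex program
`min_{S, L ∈ Sym(d), L ⪰ 0} ℓ(S+L) + λ(γ‖S‖₁ + tr L)`. -/
def IsSLSol {d : ℕ} (Phin : Mat d) (lam γ : ℝ) (p : Mat d × Mat d) : Prop :=
  p.1.IsSymm ∧ p.2.PosSemidef ∧
    ∀ q : Mat d × Mat d, q.1.IsSymm → q.2.PosSemidef →
      nll Phin (p.1 + p.2) + lam * (γ * norm1 p.1 + p.2.trace) ≤
        nll Phin (q.1 + q.2) + lam * (γ * norm1 q.1 + q.2.trace)

/-- The setup: a nonzero symmetric matrix `S*` and a positive-semidefinite `L*` with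
restricted eigenvalue decomposition `L* = U D Uᵀ` (so `L*` has rank `r`). -/
structure Setup (d r : ℕ) where
  Sstar : Mat d
  U : Matrix (Fin d) (Fin r) ℝ
  Dg : Matrix (Fin r) (Fin r) ℝ
  hU : Uᵀ * U = 1
  hDdiag : Dg.IsDiag
  hDunit : IsUnit Dg.det
  hSsymm : Sstar.IsSymm
  hSne : Sstar ≠ 0
  hLpsd : (U * Dg * Uᵀ).PosSemidef

namespace Setup

variable {d r : ℕ} (C : Setup d r)

/-- `L* = U D Uᵀ`. -/
def Lstar : Mat d := C.U * C.Dg * C.Uᵀ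

/-- `Θ* = S* + L*`. -/
def Thstar : Mat d := C.Sstar + C.Lstar

/-- `Ω = Ω(S*)`. -/
def Om : Submodule ℝ (Mat d) := OmegaS C.Sstar

/-- `T = T(L*)`. -/
def Tt : Submodule ℝ (Mat d) := TSpace C.U

/-- `H* = ∇²a(Θ*)`, the Hessian of the log-partition function at `Θ*`. -/
def Hop : Mat d → Mat d := hessA C.Thstar

/-- `‖H*‖`, the operator norm of `H*` w.r.t. the spectral norm. -/
def HopNorm : ℝ := sSup {t | ∃ M : Mat d, specNorm M = 1 ∧ t = specNorm (C.Hop M)}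

/-- `ξ(T)`. -/
def xiT : ℝ := xi C.Tt

/-- `μ(Ω)`. -/
def muOm : ℝ := mu C.Om

/-- `α_Ω = min {‖P_Ω H*(M)‖_∞ : M ∈ Ω, ‖M‖_∞ = 1}`. -/
def alphaOm : ℝ :=
  sInf {t | ∃ M, M ∈ C.Om ∧ normInf M = 1 ∧ t = normInf (proj C.Om (C.Hop M))}

/-- `α_{T,ε}`. -/
def alphaT (ε : ℝ) : ℝ :=
  sInf {t | ∃ T' : Submodule ℝ (Mat d), IsTangentSpace d r T' ∧ rho C.Tt T' ≤ ε ∧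
    ∃ M, M ∈ T' ∧ specNorm M = 1 ∧ t = specNorm (proj T' (C.Hop M))}

/-- `δ_Ω = max {‖P_{Ω^⊥} H*(M)‖_∞ : M ∈ Ω, ‖M‖_∞ = 1}`. -/
def deltaOm : ℝ :=
  sSup {t | ∃ M, M ∈ C.Om ∧ normInf M = 1 ∧ t = normInf (projPerp C.Om (C.Hop M))}

/-- `δ_{T,ε}`. -/
def deltaT (ε : ℝ) : ℝ :=
  sSup {t | ∃ T' : Submodule ℝ (Mat d), IsTangentSpace d r T' ∧ rho C.Tt T' ≤ ε ∧
    ∃ M, M ∈ T' ∧ specNorm M = 1 ∧ t = specNorm (projPerp T' (C.Hop M))}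

/-- `β_Ω = max {‖H*(M)‖ : M ∈ Ω, ‖M‖ = 1}`. -/
def betaOm : ℝ :=
  sSup {t | ∃ M, M ∈ C.Om ∧ specNorm M = 1 ∧ t = specNorm (C.Hop M)}

/-- `β_T`. -/
def betaT : ℝ :=
  sSup {t | ∃ T' : Submodule ℝ (Mat d), IsTangentSpace d r T' ∧ rho C.Tt T' ≤ C.xiT / 2 ∧
    ∃ M, M ∈ T' ∧ normInf M = 1 ∧ t = normInf (C.Hop M)}

/-- `β = max {β_Ω, β_T}`. -/
def betaC : ℝ := max C.betaOm C.betaT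

/-- `α = min {α_Ω, α_{T,ξ(T)/2}}`. -/
def alphaC : ℝ := min C.alphaOm (C.alphaT (C.xiT / 2))

/-- `δ = max {δ_Ω, δ_{T,ξ(T)/2}}`. -/
def deltaC : ℝ := max C.deltaOm (C.deltaT (C.xiT / 2))

/-- The stability assumption: `α > 0` and `δ/α ≤ 1 - 2ν` for some `ν ∈ (0, 1/2]`. -/
def Stability (ν : ℝ) : Prop :=
  0 < C.alphaC ∧ 0 < ν ∧ ν ≤ 1 / 2 ∧ C.deltaC / C.alphaC ≤ 1 - 2 * ν

/-- `γ_min = 3β(2-ν)ξ(T)/(να)`. -/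
def gammaMin (ν : ℝ) : ℝ := 3 * C.betaC * (2 - ν) * C.xiT / (ν * C.alphaC)

/-- `γ_max = να/(2β(2-ν)μ(Ω))`. -/
def gammaMax (ν : ℝ) : ℝ := ν * C.alphaC / (2 * C.betaC * (2 - ν) * C.muOm)

/-- The `γ`-feasibility assumption: the range `[γ_min, γ_max]` is non-empty. -/
def GammaFeasible (ν : ℝ) : Prop := C.gammaMin ν ≤ C.gammaMax ν

/-- `ω = max {να/(3β(2-ν)), 1}`. -/
def omg (ν : ℝ) : ℝ := max (ν * C.alphaC / (3 * C.betaC * (2 - ν))) 1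

/-- `c₂ = 40/α + 1/‖H*‖`. -/
def c2 : ℝ := 40 / C.alphaC + 1 / C.HopNorm

/-- `c₃ = (6(2-ν)/ν + 1) c₂² ‖H*‖ ω`. -/
def c3 (ν : ℝ) : ℝ := (6 * (2 - ν) / ν + 1) * C.c2 ^ 2 * C.HopNorm * C.omg ν

/-- `c₄ = c₂ + 3αc₂²(2-ν)/(16(3-ν))`. -/
def c4 (ν : ℝ) : ℝ := C.c2 + 3 * C.alphaC * C.c2 ^ 2 * (2 - ν) / (16 * (3 - ν))

/-- `c₅ = max {c₃, c₄}`. -/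
def c5 (ν : ℝ) : ℝ := max (C.c3 ν) (C.c4 ν)

/-- `c₆ = ναc₂/(2β(2-ν))`. -/
def c6 (ν : ℝ) : ℝ := ν * C.alphaC * C.c2 / (2 * C.betaC * (2 - ν))

/-- `c₀ = 2 l(r₀) ω max{να/(2β(2-ν)), 1}²`. -/
def c0 (ν l0 : ℝ) : ℝ :=
  2 * l0 * C.omg ν * (max (ν * C.alphaC / (2 * C.betaC * (2 - ν))) 1) ^ 2

/-- `c₁ = max{1, να/(2β(2-ν))}⁻¹ r₀/2`. -/
def c1 (ν r0 : ℝ) : ℝ :=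
  (max 1 (ν * C.alphaC / (2 * C.betaC * (2 - ν))))⁻¹ * r0 / 2

/-- `s_min`, the smallest absolute value of a nonzero entry of `S*`. -/
def smin : ℝ := sInf {t | ∃ i j, C.Sstar i j ≠ 0 ∧ t = |C.Sstar i j|}

/-- `σ_min`, the smallest nonzero eigenvalue of `L*`. -/
def sigmin : ℝ := sInf {t | t ≠ 0 ∧ ∃ i, t = C.hLpsd.1.eigenvalues i}

/-- The gap assumption: `s_min ≥ c₆λ_n/μ(Ω)` and `σ_min ≥ c₅λ_n/ξ(T)²`. -/
def GapAssumption (ν lam : ℝ) : Prop :=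
  C.c6 ν * lam / C.muOm ≤ C.smin ∧ C.c5 ν * lam / C.xiT ^ 2 ≤ C.sigmin

/-- `l0` is a Lipschitz constant (in operator norm w.r.t. the spectral norm) of the
Hessian `∇²a` on the ball `{Θ : ‖Θ - Θ*‖ ≤ r0}`. -/
def HessLip (r0 l0 : ℝ) : Prop :=
  ∀ Θ Θ' : Mat d, specNorm (Θ - C.Thstar) ≤ r0 → specNorm (Θ' - C.Thstar) ≤ r0 →
    ∀ M : Mat d, specNorm (hessA Θ M - hessA Θ' M) ≤ l0 * specNorm (Θ - Θ') * specNorm M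

/-- The correct model set `M`. -/
def Mset (γ ν lam : ℝ) : Set (Mat d × Mat d) :=
  {p | p.1 ∈ C.Om ∧ p.2.IsSymm ∧ p.2.rank ≤ C.Lstar.rank ∧
    ganorm γ (C.Hop ((p.1 - C.Sstar) + (p.2 - C.Lstar)))
      (C.Hop ((p.1 - C.Sstar) + (p.2 - C.Lstar))) ≤ 9 * lam ∧
    specNorm (projPerp C.Tt (p.2 - C.Lstar)) ≤ C.xiT * lam / (C.omg ν * C.HopNorm)}

end Setup

lemma coupling_bounds_of_mem_Icc {α β ξ μ ν γ : ℝ} (hα : 0 < α) (hβ : 0 < β) (hξ : 0 < ξ)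
    (hμ : 0 < μ) (hν : 0 < ν) (hν2 : ν ≤ 1 / 2)
    (hγ : γ ∈ Set.Icc (3 * β * (2 - ν) * ξ / (ν * α)) (ν * α / (2 * β * (2 - ν) * μ))) :
    0 < γ ∧ 4 * β * ξ ≤ α * γ ∧ 4 * β * μ * γ ≤ α := by
  have h2ν : 0 < 2 - ν := by linarith
  have hlo := (div_le_iff₀ (mul_pos hν hα)).1 hγ.1
  have hhi := (le_div_iff₀ (by positivity)).1 hγ.2
  have hγ0 : 0 < γ := lt_of_lt_of_le (by positivity) hγ.1
  refine ⟨hγ0, ?_, ?_⟩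
  · nlinarith [mul_pos hβ hξ, mul_pos hγ0 hα]
  · nlinarith [mul_pos (mul_pos hβ hμ) hγ0, mul_pos hγ0 hα]

lemma half_mul_max_le_max {α γ p q m n a b : ℝ} (hγ : 0 < γ) (hp : 0 ≤ p) (hq : 0 ≤ q)
    (hm : 0 ≤ m) (hn : 0 ≤ n) (hpγ : 2 * p ≤ α * γ) (hqγ : 2 * q * γ ≤ α)
    (ha : α * m - p * n ≤ a) (hb : α * n - q * m ≤ b) :
    α / 2 * max (m / γ) n ≤ max (a / γ) b := by
  rcases le_total n (m / γ) with hnm | hmn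
  · rw [max_eq_left hnm]
    refine le_trans ?_ (le_max_left _ _)
    rw [le_div_iff₀ hγ] at hnm
    rw [← mul_div_assoc]
    gcongr
    nlinarith [mul_le_mul_of_nonneg_left hnm hp, mul_le_mul_of_nonneg_right hpγ hm]
  · rw [max_eq_right hmn]
    refine le_trans ?_ (le_max_right _ _)
    rw [div_le_iff₀ hγ] at hmn
    nlinarith [mul_le_mul_of_nonneg_left hmn hq, mul_le_mul_of_nonneg_right hqγ hn]

section Homogeneous

variable {E : Type*} [AddCommGroup E] [Module ℝ E] {n f : E → ℝ} {P : E → Prop} {k : ℝ}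

lemma mul_le_of_forall_eq_one_le (hn : ∀ (c : ℝ) x, n (c • x) = |c| * n x)
    (hn0 : ∀ x, x ≠ 0 → 0 < n x) (hf : ∀ (c : ℝ) x, f (c • x) = |c| * f x)
    (hP : ∀ (c : ℝ) x, P x → P (c • x)) (hk : ∀ x, P x → n x = 1 → k ≤ f x) {x : E}
    (hx : P x) : k * n x ≤ f x := by
  rcases eq_or_ne x 0 with rfl | hx0
  · have hn0' : n 0 = 0 := by simpa using hn 0 0
    have hf0 : f 0 = 0 := by simpa using hf 0 0
    rw [hn0', hf0, mul_zero]
  · have hpos := hn0 x hx0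
    have hscaled := hk _ (hP (n x)⁻¹ x hx) (by rw [hn, abs_inv, abs_of_pos hpos,
      inv_mul_cancel₀ hpos.ne'])
    rw [hf, abs_inv, abs_of_pos hpos, inv_mul_eq_div, le_div_iff₀ hpos] at hscaled
    exact hscaled

lemma le_mul_of_forall_eq_one_le (hn : ∀ (c : ℝ) x, n (c • x) = |c| * n x)
    (hn0 : ∀ x, x ≠ 0 → 0 < n x) (hf : ∀ (c : ℝ) x, f (c • x) = |c| * f x)
    (hP : ∀ (c : ℝ) x, P x → P (c • x)) (hk : ∀ x, P x → n x = 1 → f x ≤ k) {x : E}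
    (hx : P x) : f x ≤ k * n x := by
  have := mul_le_of_forall_eq_one_le (f := fun x => -f x) (k := -k) hn hn0
    (fun c x => by rw [hf, mul_neg]) hP (fun x hx h1 => neg_le_neg (hk x hx h1)) hx
  linarith

end Homogeneous

section MatrixNorms

open scoped Matrix.Norms.L2Operator

variable {d : ℕ}

lemma vnorm_eq_norm (v : Fin d → ℝ) : vnorm v = ‖WithLp.toLp 2 v‖ := by
  simp [vnorm, EuclideanSpace.norm_eq, sq_abs]

lemma specNorm_eq_norm (M : Mat d) : specNorm M = ‖M‖ := by
  rw [Matrix.l2_opNorm_def, ← ContinuousLinearMap.sSup_unitClosedBall_eq_norm]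
  refine congrArg sSup (Set.ext fun t => ?_)
  simp only [Set.mem_image, Metric.mem_closedBall, dist_zero_right,
    vnorm_eq_norm]
  constructor
  · rintro ⟨v, hv, rfl⟩
    exact ⟨WithLp.toLp 2 v, hv, rfl⟩
  · rintro ⟨x, hx, rfl⟩
    exact ⟨x.ofLp, hx, rfl⟩

lemma specNorm_nonneg (M : Mat d) : 0 ≤ specNorm M := by
  rw [specNorm_eq_norm]; exact norm_nonneg M

lemma specNorm_pos {M : Mat d} (h : M ≠ 0) : 0 < specNorm M := by
  rw [specNorm_eq_norm]; exact norm_pos_iff.mpr h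

lemma specNorm_smul (c : ℝ) (M : Mat d) : specNorm (c • M) = |c| * specNorm M := by
  rw [specNorm_eq_norm, specNorm_eq_norm, norm_smul, Real.norm_eq_abs]

lemma specNorm_add_le (A B : Mat d) : specNorm (A + B) ≤ specNorm A + specNorm B := by
  simp only [specNorm_eq_norm]; exact norm_add_le A B

lemma specNorm_sub_le_specNorm_add (A B : Mat d) :
    specNorm A - specNorm B ≤ specNorm (A + B) := by
  simp only [specNorm_eq_norm]
  simpa using norm_sub_norm_le A (-B)

lemma specNorm_sub_comm (A B : Mat d) : specNorm (A - B) = specNorm (B - A) := by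
  simp only [specNorm_eq_norm]; exact norm_sub_rev A B

lemma specNorm_mul_le (A B : Mat d) : specNorm (A * B) ≤ specNorm A * specNorm B := by
  simp only [specNorm_eq_norm]; exact Matrix.l2_opNorm_mul A B

lemma specNorm_transpose (M : Mat d) : specNorm Mᵀ = specNorm M := by
  rw [specNorm_eq_norm, specNorm_eq_norm, ← Matrix.conjTranspose_eq_transpose_of_trivial,
    Matrix.l2_opNorm_conjTranspose]

lemma exists_specNorm_map_le (f : Mat d →ₗ[ℝ] Mat d) :
    ∃ K, ∀ M, specNorm (f M) ≤ K * specNorm M := by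
  refine ⟨‖LinearMap.toContinuousLinearMap f‖, fun M => ?_⟩
  rw [specNorm_eq_norm, specNorm_eq_norm]
  exact (LinearMap.toContinuousLinearMap f).le_opNorm M

def entriesₗ (d : ℕ) : Mat d ≃ₗ[ℝ] (Fin d × Fin d → ℝ) where
  toFun M p := M p.1 p.2
  invFun v := Matrix.of fun i j => v (i, j)
  map_add' _ _ := rfl
  map_smul' _ _ := rfl
  left_inv _ := rfl
  right_inv _ := rfl

lemma normInf_eq_norm (M : Mat d) : normInf M = ‖entriesₗ d M‖ := by
  refine le_antisymm
    (Real.iSup_le (fun p => norm_le_pi_norm (entriesₗ d M) p) (norm_nonneg _)) ?_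
  refine (pi_norm_le_iff_of_nonneg (Real.iSup_nonneg fun _ => abs_nonneg _)).2 fun p => ?_
  exact le_ciSup (f := fun p : Fin d × Fin d => |M p.1 p.2|) (Set.finite_range _).bddAbove p

lemma abs_le_normInf (M : Mat d) (i j : Fin d) : |M i j| ≤ normInf M := by
  rw [normInf_eq_norm]; exact norm_le_pi_norm (entriesₗ d M) (i, j)

lemma normInf_le_of_forall_abs_le {M : Mat d} {c : ℝ} (hc : 0 ≤ c)
    (h : ∀ i j, |M i j| ≤ c) : normInf M ≤ c := by
  rw [normInf_eq_norm]; exact (pi_norm_le_iff_of_nonneg hc).2 fun p => h p.1 p.2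

lemma normInf_nonneg (M : Mat d) : 0 ≤ normInf M := by
  rw [normInf_eq_norm]; exact norm_nonneg _

lemma normInf_pos {M : Mat d} (h : M ≠ 0) : 0 < normInf M := by
  rw [normInf_eq_norm]
  exact norm_pos_iff.mpr fun h0 => h ((entriesₗ d).map_eq_zero_iff.mp h0)

lemma normInf_smul (c : ℝ) (M : Mat d) : normInf (c • M) = |c| * normInf M := by
  simp only [normInf_eq_norm]; exact norm_smul c (entriesₗ d M)

lemma normInf_add_le (A B : Mat d) : normInf (A + B) ≤ normInf A + normInf B := by
  simp only [normInf_eq_norm]; exact norm_add_le (entriesₗ d A) (entriesₗ d B)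

lemma normInf_sub_le_normInf_add (A B : Mat d) :
    normInf A - normInf B ≤ normInf (A + B) := by
  simp only [normInf_eq_norm]
  have h := norm_sub_norm_le (entriesₗ d A) (-entriesₗ d B)
  rwa [norm_neg, sub_neg_eq_add] at h

lemma normInf_le_specNorm (M : Mat d) : normInf M ≤ specNorm M := by
  refine normInf_le_of_forall_abs_le (specNorm_nonneg M) fun i j => ?_
  have hcol : (M *ᵥ Pi.single j 1) i = M i j := by simp [Matrix.mulVec_single]
  calc |M i j| = ‖(WithLp.toLp 2 (M *ᵥ Pi.single j 1) : EuclideanSpace ℝ (Fin d)) i‖ := by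
        rw [← hcol]; rfl
    _ ≤ ‖(WithLp.toLp 2 (M *ᵥ Pi.single j 1) : EuclideanSpace ℝ (Fin d))‖ :=
        PiLp.norm_apply_le _ i
    _ ≤ specNorm M * ‖EuclideanSpace.single j (1 : ℝ)‖ := by
        rw [specNorm_eq_norm]; exact Matrix.l2_opNorm_mulVec M (EuclideanSpace.single j 1)
    _ = specNorm M := by simp

lemma exists_specNorm_map_le_mul_normInf (f : Mat d →ₗ[ℝ] Mat d) :
    ∃ K, ∀ M, specNorm (f M) ≤ K * normInf M := by
  let g := LinearMap.toContinuousLinearMap (f ∘ₗ (entriesₗ d).symm.toLinearMap)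
  refine ⟨‖g‖, fun M => ?_⟩
  rw [specNorm_eq_norm, normInf_eq_norm]
  exact g.le_opNorm (entriesₗ d M)

end MatrixNorms

section Projections

variable {d : ℕ}

lemma minner_eq_sum (A B : Mat d) : minner A B = ∑ i, ∑ j, A i j * B i j := by
  rw [minner, Matrix.trace, Finset.sum_comm]
  simp only [Matrix.diag_apply, Matrix.mul_apply, Matrix.transpose_apply]

lemma inner_matEuclid (A B : Mat d) :
    inner ℝ (matEuclid d A) (matEuclid d B) = minner A B := by
  rw [minner_eq_sum, ← Finset.sum_product', PiLp.inner_apply]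
  refine Finset.sum_congr rfl fun p _ => ?_
  change inner ℝ (A p.1 p.2) (B p.1 p.2) = _
  rw [RCLike.inner_apply', conj_trivial]

lemma proj_add (V : Submodule ℝ (Mat d)) (A B : Mat d) :
    proj V (A + B) = proj V A + proj V B := by
  simp only [proj, map_add, Submodule.coe_add]

lemma proj_smul (V : Submodule ℝ (Mat d)) (c : ℝ) (A : Mat d) :
    proj V (c • A) = c • proj V A := by
  simp only [proj, _root_.map_smul, Submodule.coe_smul]

def projₗ (V : Submodule ℝ (Mat d)) : Mat d →ₗ[ℝ] Mat d where
  toFun := proj V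
  map_add' := proj_add V
  map_smul' := proj_smul V

lemma proj_mem (V : Submodule ℝ (Mat d)) (X : Mat d) : proj V X ∈ V := by
  obtain ⟨q, hq, hqe⟩ := (Submodule.orthogonalProjectionOnto (V.map
    ((matEuclid d) : Mat d →ₗ[ℝ] EuclideanSpace ℝ (Fin d × Fin d))) (matEuclid d X)).2
  rw [proj, ← hqe]
  simpa using hq

lemma proj_eq_of_forall_minner_eq_zero {V : Submodule ℝ (Mat d)} {X p : Mat d} (hp : p ∈ V)
    (h : ∀ q ∈ V, minner (X - p) q = 0) : proj V X = p := by
  have hpV : matEuclid d p ∈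
      V.map ((matEuclid d) : Mat d →ₗ[ℝ] EuclideanSpace ℝ (Fin d × Fin d)) := ⟨p, hp, rfl⟩
  have key := Submodule.eq_starProjection_of_mem_of_inner_eq_zero hpV (u := matEuclid d X)
    (fun w hw => by
      obtain ⟨q, hq, rfl⟩ := hw
      rw [← map_sub, LinearEquiv.coe_coe, inner_matEuclid]
      exact h q hq)
  rw [proj, ← Submodule.starProjection_apply, key]
  exact (matEuclid d).symm_apply_apply p

lemma proj_of_mem {V : Submodule ℝ (Mat d)} {M : Mat d} (h : M ∈ V) : proj V M = M :=
  proj_eq_of_forall_minner_eq_zero h fun q _ => by simp [minner_eq_sum]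

end Projections

section Constants

variable {d : ℕ}

lemma normInf_le_xi_mul {T : Submodule ℝ (Mat d)} {M : Mat d} (hM : M ∈ T) :
    normInf M ≤ xi T * specNorm M :=
  le_mul_of_forall_eq_one_le specNorm_smul (fun _ => specNorm_pos) normInf_smul
    (fun c _ h => T.smul_mem c h)
    (fun N hN h1 => le_csInf ⟨1, fun N _ => by simpa using normInf_le_specNorm N⟩
      fun c hc => by simpa [h1] using hc N hN) hM

lemma specNorm_le_mu_mul {Om : Submodule ℝ (Mat d)} {M : Mat d} (hM : M ∈ Om) :
    specNorm M ≤ mu Om * normInf M := by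
  obtain ⟨K, hK⟩ := exists_specNorm_map_le_mul_normInf (LinearMap.id : Mat d →ₗ[ℝ] Mat d)
  exact le_mul_of_forall_eq_one_le normInf_smul (fun _ => normInf_pos) specNorm_smul
    (fun c _ h => Om.smul_mem c h)
    (fun N hN h1 => by
      rw [mu]
      exact le_csInf ⟨K, fun N _ => hK N⟩ fun c hc => by simpa [h1] using hc N hN) hM

lemma xi_le_one {T : Submodule ℝ (Mat d)} {M : Mat d} (hM : M ∈ T) (h0 : M ≠ 0) :
    xi T ≤ 1 := by
  refine csInf_le ⟨0, fun c hc => ?_⟩ fun N _ => by simpa using normInf_le_specNorm N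
  exact nonneg_of_mul_nonneg_left ((normInf_nonneg M).trans (hc M hM)) (specNorm_pos h0)

lemma xi_pos {T : Submodule ℝ (Mat d)} {M : Mat d} (hM : M ∈ T) (h0 : M ≠ 0) : 0 < xi T :=
  pos_of_mul_pos_left ((normInf_pos h0).trans_le (normInf_le_xi_mul hM)) (specNorm_nonneg M)

lemma mu_pos {Om : Submodule ℝ (Mat d)} {M : Mat d} (hM : M ∈ Om) (h0 : M ≠ 0) : 0 < mu Om :=
  pos_of_mul_pos_left ((specNorm_pos h0).trans_le (specNorm_le_mu_mul hM)) (normInf_nonneg M)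

lemma specNorm_proj_sub_proj_le (T T' : Submodule ℝ (Mat d)) (N : Mat d) :
    specNorm (proj T N - proj T' N) ≤ rho T T' * specNorm N := by
  obtain ⟨K, hK⟩ := exists_specNorm_map_le (projₗ T - projₗ T')
  refine le_mul_of_forall_eq_one_le (P := fun _ => True)
    (f := fun M => specNorm (proj T M - proj T' M)) (k := rho T T')
    specNorm_smul (fun _ => specNorm_pos)
    (fun c M => by rw [proj_smul, proj_smul, ← smul_sub, specNorm_smul])
    (fun _ _ _ => trivial)
    (fun M _ h1 => le_csSup ⟨K, ?_⟩ ⟨M, h1, rfl⟩) trivial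
  rintro t ⟨M, hM1, rfl⟩
  exact (hK M).trans_eq (by rw [hM1, mul_one])

lemma normInf_le_two_xi_mul {T T' : Submodule ℝ (Mat d)} (hξ0 : 0 ≤ xi T) (hξ1 : xi T ≤ 1)
    (hrho : rho T T' ≤ xi T / 2) {N : Mat d} (hN : N ∈ T') :
    normInf N ≤ 2 * xi T * specNorm N := by
  have hdist : specNorm (N - proj T N) ≤ xi T / 2 * specNorm N := by
    calc specNorm (N - proj T N) = specNorm (proj T N - proj T' N) := by
          rw [proj_of_mem hN, specNorm_sub_comm]
      _ ≤ rho T T' * specNorm N := specNorm_proj_sub_proj_le T T' N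
      _ ≤ xi T / 2 * specNorm N := mul_le_mul_of_nonneg_right hrho (specNorm_nonneg N)
  have hproj : specNorm (proj T N) ≤ specNorm N + specNorm (N - proj T N) := by
    simpa [specNorm_sub_comm N] using specNorm_add_le N (proj T N - N)
  calc normInf N ≤ normInf (proj T N) + normInf (N - proj T N) := by
        simpa using normInf_add_le (proj T N) (N - proj T N)
    _ ≤ xi T * specNorm (proj T N) + specNorm (N - proj T N) :=
        add_le_add (normInf_le_xi_mul (proj_mem T N)) (normInf_le_specNorm _)
    _ ≤ 2 * xi T * specNorm N := by
        nlinarith [mul_le_mul_of_nonneg_left hproj hξ0, specNorm_nonneg N,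
          mul_nonneg (mul_nonneg hξ0 (specNorm_nonneg N)) (sub_nonneg.2 hξ1)]

end Constants

section TangentProjections

variable {d : ℕ}

lemma sum_sum_eq_zero_of_antisymm {g : Fin d → Fin d → ℝ} (h : ∀ i j, g j i = -g i j) :
    ∑ i, ∑ j, g i j = 0 := by
  have hswap : ∑ i, ∑ j, g i j = -∑ i, ∑ j, g i j := by
    conv_lhs => rw [Finset.sum_comm]
    rw [← Finset.sum_neg_distrib]
    refine Finset.sum_congr rfl fun i _ => ?_
    rw [← Finset.sum_neg_distrib]
    exact Finset.sum_congr rfl fun j _ => h i j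
  linarith

def projOmegaS (S X : Mat d) : Mat d :=
  Matrix.of fun i j => if S i j = 0 then 0 else (X i j + X j i) / 2

lemma proj_OmegaS {S : Mat d} (hS : S.IsSymm) (X : Mat d) :
    proj (OmegaS S) X = projOmegaS S X := by
  refine proj_eq_of_forall_minner_eq_zero ⟨?_, fun i j h => by simp [projOmegaS, h]⟩ ?_
  · ext i j
    simp only [Matrix.transpose_apply, projOmegaS, Matrix.of_apply, hS.apply i j,
      add_comm (X j i)]
  rintro q ⟨hq, hq0⟩
  rw [minner_eq_sum]
  refine sum_sum_eq_zero_of_antisymm fun i j => ?_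
  by_cases h : S i j = 0
  · rw [hq0 i j h, hq0 j i (by rwa [hS.apply i j]), mul_zero, mul_zero, neg_zero]
  · have h' : S j i ≠ 0 := by rwa [hS.apply i j]
    simp only [Matrix.sub_apply, projOmegaS, Matrix.of_apply, if_neg h, if_neg h',
      hq.apply i j]
    ring

lemma normInf_proj_OmegaS_le {S : Mat d} (hS : S.IsSymm) (X : Mat d) :
    normInf (proj (OmegaS S) X) ≤ normInf X := by
  rw [proj_OmegaS hS]
  refine normInf_le_of_forall_abs_le (normInf_nonneg X) fun i j => ?_
  simp only [projOmegaS, Matrix.of_apply]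
  split_ifs
  · simpa using normInf_nonneg X
  · rw [abs_div, abs_two]
    linarith [abs_add_le (X i j) (X j i), abs_le_normInf X i j, abs_le_normInf X j i]

def symmPart (X : Mat d) : Mat d := (2 : ℝ)⁻¹ • (X + Xᵀ)

lemma symmPart_transpose (X : Mat d) : (symmPart X)ᵀ = symmPart X := by
  rw [symmPart, Matrix.transpose_smul, Matrix.transpose_add, Matrix.transpose_transpose,
    add_comm]

lemma specNorm_symmPart_le (X : Mat d) : specNorm (symmPart X) ≤ specNorm X := by
  rw [symmPart, specNorm_smul]
  have := specNorm_add_le X Xᵀ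
  rw [specNorm_transpose] at this
  rw [abs_of_pos (by norm_num)]
  linarith

lemma minner_eq_zero_of_antisymm_of_symm {A q : Mat d} (hA : Aᵀ = -A) (hq : qᵀ = q) :
    minner A q = 0 := by
  rw [minner_eq_sum]
  refine sum_sum_eq_zero_of_antisymm fun i j => ?_
  rw [← Matrix.transpose_apply A, hA, ← Matrix.transpose_apply q j i, hq]
  simp [mul_comm]

variable {r : ℕ} {U : Matrix (Fin d) (Fin r) ℝ}

/-- `P Xₛ + Xₛ P - P Xₛ P` for `P = U Uᵀ` and `Xₛ = symmPart X`, grouped so that both summands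
are visibly contractions of `Xₛ`. -/
def projTSpace (U : Matrix (Fin d) (Fin r) ℝ) (X : Mat d) : Mat d :=
  U * Uᵀ * symmPart X + (1 - U * Uᵀ) * symmPart X * (U * Uᵀ)

lemma projTSpace_mem (X : Mat d) : projTSpace U X ∈ TSpace U := by
  refine ⟨symmPart X * U - (2 : ℝ)⁻¹ • (U * Uᵀ * symmPart X * U), ?_⟩
  simp only [projTSpace, Matrix.transpose_sub, Matrix.transpose_smul, Matrix.transpose_mul,
    Matrix.transpose_transpose, symmPart_transpose, Matrix.mul_sub, Matrix.sub_mul,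
    Matrix.mul_smul, Matrix.smul_mul, Matrix.mul_assoc, Matrix.one_mul]
  module

lemma proj_TSpace (hU : Uᵀ * U = 1) (X : Mat d) : proj (TSpace U) X = projTSpace U X := by
  refine proj_eq_of_forall_minner_eq_zero (projTSpace_mem X) ?_
  rintro _ ⟨Y, rfl⟩
  set Q : Mat d := 1 - U * Uᵀ
  have hQU : Q * U = 0 := by
    rw [Matrix.sub_mul, Matrix.one_mul, Matrix.mul_assoc, hU, Matrix.mul_one, sub_self]
  have hQt : Qᵀ = Q := by simp [Q, Matrix.transpose_sub]
  have hresidual : X - projTSpace U X = (X - symmPart X) + Q * symmPart X * Q := by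
    simp only [projTSpace, Q, Matrix.sub_mul, Matrix.mul_sub, Matrix.one_mul, Matrix.mul_one]
    abel
  have hanti : (X - symmPart X)ᵀ = -(X - symmPart X) := by
    rw [Matrix.transpose_sub, symmPart_transpose, symmPart]
    ext i j
    simp only [Matrix.sub_apply, Matrix.neg_apply, Matrix.transpose_apply, Matrix.smul_apply,
      Matrix.add_apply, smul_eq_mul]
    ring
  have hsymm : (U * Yᵀ + Y * Uᵀ)ᵀ = U * Yᵀ + Y * Uᵀ := by
    simp only [Matrix.transpose_add, Matrix.transpose_mul, Matrix.transpose_transpose, add_comm]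
  have hcompl : minner (Q * symmPart X * Q) (U * Yᵀ + Y * Uᵀ) = 0 := by
    have hUQ : Uᵀ * Q = 0 := by rw [← hQt, ← Matrix.transpose_mul, hQU, Matrix.transpose_zero]
    rw [minner, Matrix.transpose_mul, Matrix.transpose_mul, hQt, symmPart_transpose,
      Matrix.mul_add, Matrix.trace_add, Matrix.trace_mul_comm _ (Y * Uᵀ)]
    have hleft : Q * (symmPart X * Q) * (U * Yᵀ) = 0 := by
      rw [Matrix.mul_assoc Q, Matrix.mul_assoc (symmPart X), ← Matrix.mul_assoc Q U, hQU,
        Matrix.zero_mul, Matrix.mul_zero, Matrix.mul_zero]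
    have hright : Y * Uᵀ * (Q * (symmPart X * Q)) = 0 := by
      rw [Matrix.mul_assoc Y, ← Matrix.mul_assoc Uᵀ Q, hUQ, Matrix.zero_mul, Matrix.mul_zero]
    rw [hleft, hright, Matrix.trace_zero, add_zero]
  rw [hresidual, minner, Matrix.transpose_add, Matrix.add_mul, Matrix.trace_add, ← minner,
    ← minner, minner_eq_zero_of_antisymm_of_symm hanti hsymm, hcompl, add_zero]

lemma specNorm_le_one_of_transpose_mul_self {Q : Mat d} (h : Qᵀ * Q = Q) :
    specNorm Q ≤ 1 := by
  have hsq := Matrix.l2_opNorm_conjTranspose_mul_self Q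
  rw [Matrix.conjTranspose_eq_transpose_of_trivial, h, ← specNorm_eq_norm] at hsq
  nlinarith [specNorm_nonneg Q]

lemma specNorm_projTSpace_le (hU : Uᵀ * U = 1) (X : Mat d) :
    specNorm (projTSpace U X) ≤ 2 * specNorm X := by
  have hPt : (U * Uᵀ)ᵀ = U * Uᵀ := by rw [Matrix.transpose_mul, Matrix.transpose_transpose]
  have hPP : U * Uᵀ * (U * Uᵀ) = U * Uᵀ := by
    rw [Matrix.mul_assoc, ← Matrix.mul_assoc Uᵀ, hU, Matrix.one_mul]
  have hP : (U * Uᵀ)ᵀ * (U * Uᵀ) = U * Uᵀ := by rw [hPt, hPP]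
  have hQ : (1 - U * Uᵀ)ᵀ * (1 - U * Uᵀ) = 1 - U * Uᵀ := by
    rw [Matrix.transpose_sub, Matrix.transpose_one, hPt, Matrix.sub_mul, Matrix.mul_sub,
      Matrix.mul_sub, Matrix.one_mul, Matrix.one_mul, Matrix.mul_one, hPP, sub_self, sub_zero]
  have hP1 := specNorm_le_one_of_transpose_mul_self hP
  have hQ1 := specNorm_le_one_of_transpose_mul_self hQ
  have hXs := specNorm_symmPart_le X
  have h0 := specNorm_nonneg (symmPart X)
  calc specNorm (projTSpace U X)
      ≤ specNorm (U * Uᵀ) * specNorm (symmPart X)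
        + specNorm (1 - U * Uᵀ) * specNorm (symmPart X) * specNorm (U * Uᵀ) :=
        (specNorm_add_le _ _).trans (add_le_add (specNorm_mul_le _ _)
          ((specNorm_mul_le _ _).trans (mul_le_mul_of_nonneg_right (specNorm_mul_le _ _)
            (specNorm_nonneg _))))
    _ ≤ 2 * specNorm X := by
        have := mul_le_mul hQ1 hP1 (specNorm_nonneg _) zero_le_one
        nlinarith [specNorm_nonneg (U * Uᵀ), specNorm_nonneg (1 - U * Uᵀ)]

end TangentProjections

section Hessian

variable {d : ℕ}

lemma minner_add_right (A B C : Mat d) : minner A (B + C) = minner A B + minner A C := by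
  rw [minner, Matrix.mul_add, Matrix.trace_add]; rfl

lemma minner_smul_right (c : ℝ) (A B : Mat d) : minner A (c • B) = c * minner A B := by
  rw [minner, Matrix.mul_smul, Matrix.trace_smul, smul_eq_mul]; rfl

lemma hessA_add (Θ M N : Mat d) : hessA Θ (M + N) = hessA Θ M + hessA Θ N := by
  simp only [hessA, minner_add_right, mul_add, add_smul, Finset.sum_add_distrib]
  abel

lemma hessA_smul (Θ : Mat d) (c : ℝ) (M : Mat d) : hessA Θ (c • M) = c • hessA Θ M := by
  simp only [hessA, minner_smul_right, smul_sub, Finset.smul_sum, smul_smul]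
  congr 1
  exact Finset.sum_congr rfl fun x _ => by rw [mul_left_comm]

def hessₗ (Θ : Mat d) : Mat d →ₗ[ℝ] Mat d where
  toFun := hessA Θ
  map_add' := hessA_add Θ
  map_smul' := hessA_smul Θ

end Hessian

namespace Setup

variable {d r : ℕ} (C : Setup d r)

lemma Hop_add (M N : Mat d) : C.Hop (M + N) = C.Hop M + C.Hop N := hessA_add _ M N

lemma Hop_smul (c : ℝ) (M : Mat d) : C.Hop (c • M) = c • C.Hop M := hessA_smul _ c M

lemma Sstar_mem_Om : C.Sstar ∈ C.Om := ⟨C.hSsymm, fun _ _ h => h⟩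

lemma Lstar_mem_Tt : C.Lstar ∈ C.Tt := by
  refine ⟨(2 : ℝ)⁻¹ • (C.U * C.Dg), ?_⟩
  rw [Matrix.transpose_smul, Matrix.transpose_mul, C.hDdiag.isSymm, Matrix.mul_smul,
    Matrix.smul_mul, ← Matrix.mul_assoc, ← add_smul, Lstar]
  norm_num

lemma Lstar_ne_zero (hr : 1 ≤ r) : C.Lstar ≠ 0 := by
  intro h
  have hD : C.Uᵀ * C.Lstar * C.U = C.Dg := by
    rw [Lstar, Matrix.mul_assoc C.U, ← Matrix.mul_assoc C.Uᵀ C.U, C.hU, Matrix.one_mul,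
      Matrix.mul_assoc, C.hU, Matrix.mul_one]
  have : Nonempty (Fin r) := ⟨⟨0, hr⟩⟩
  simpa [h, ← hD] using C.hDunit

lemma xiT_pos (hr : 1 ≤ r) : 0 < C.xiT := xi_pos C.Lstar_mem_Tt (C.Lstar_ne_zero hr)

lemma xiT_le_one (hr : 1 ≤ r) : C.xiT ≤ 1 := xi_le_one C.Lstar_mem_Tt (C.Lstar_ne_zero hr)

lemma muOm_pos : 0 < C.muOm := mu_pos C.Sstar_mem_Om C.hSne

lemma alphaOm_mul_le {M : Mat d} (hM : M ∈ C.Om) :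
    C.alphaOm * normInf M ≤ normInf (proj C.Om (C.Hop M)) :=
  mul_le_of_forall_eq_one_le (f := fun M => normInf (proj C.Om (C.Hop M)))
    (k := C.alphaOm) normInf_smul (fun _ => normInf_pos)
    (fun c M => by rw [Hop_smul, proj_smul, normInf_smul]) (fun c _ h => C.Om.smul_mem c h)
    (fun M hM h1 => csInf_le ⟨0, fun _ ⟨_, _, _, ht⟩ => ht ▸ normInf_nonneg _⟩
      ⟨M, hM, h1, rfl⟩) hM

lemma alphaT_mul_le {ε : ℝ} {T' : Submodule ℝ (Mat d)} (hT' : IsTangentSpace d r T')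
    (hrho : rho C.Tt T' ≤ ε) {N : Mat d} (hN : N ∈ T') :
    C.alphaT ε * specNorm N ≤ specNorm (proj T' (C.Hop N)) :=
  mul_le_of_forall_eq_one_le (f := fun M => specNorm (proj T' (C.Hop M)))
    (k := C.alphaT ε) specNorm_smul (fun _ => specNorm_pos)
    (fun c M => by rw [Hop_smul, proj_smul, specNorm_smul]) (fun c _ h => T'.smul_mem c h)
    (fun M hM h1 => csInf_le ⟨0, fun _ ⟨_, _, _, _, _, _, ht⟩ => ht ▸ specNorm_nonneg _⟩
      ⟨T', hT', hrho, M, hM, h1, rfl⟩) hN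

lemma specNorm_Hop_le {M : Mat d} (hM : M ∈ C.Om) :
    specNorm (C.Hop M) ≤ C.betaOm * specNorm M := by
  obtain ⟨K, hK⟩ := exists_specNorm_map_le (hessₗ C.Thstar)
  refine le_mul_of_forall_eq_one_le (f := fun M => specNorm (C.Hop M)) (k := C.betaOm)
    specNorm_smul (fun _ => specNorm_pos) (fun c M => by rw [Hop_smul, specNorm_smul])
    (fun c _ h => C.Om.smul_mem c h)
    (fun M hM h1 => le_csSup ⟨K, ?_⟩ ⟨M, hM, h1, rfl⟩) hM
  rintro _ ⟨M, _, hM1, rfl⟩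
  exact (hK M).trans_eq (by rw [hM1, mul_one])

lemma normInf_Hop_le {T' : Submodule ℝ (Mat d)} (hT' : IsTangentSpace d r T')
    (hrho : rho C.Tt T' ≤ C.xiT / 2) {N : Mat d} (hN : N ∈ T') :
    normInf (C.Hop N) ≤ C.betaT * normInf N := by
  obtain ⟨K, hK⟩ := exists_specNorm_map_le_mul_normInf (hessₗ C.Thstar)
  refine le_mul_of_forall_eq_one_le (f := fun M => normInf (C.Hop M)) (k := C.betaT)
    normInf_smul (fun _ => normInf_pos) (fun c M => by rw [Hop_smul, normInf_smul])
    (fun c _ h => T'.smul_mem c h)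
    (fun M hM h1 => le_csSup ⟨K, ?_⟩ ⟨T', hT', hrho, M, hM, h1, rfl⟩) hN
  rintro _ ⟨_, _, _, M, _, hM1, rfl⟩
  exact (normInf_le_specNorm _).trans ((hK M).trans_eq (by rw [hM1, mul_one]))

-- Without this, `gammaMin = gammaMax = 0` (division by zero) would admit the junk value `γ = 0`.
lemma betaC_pos (hα : 0 < C.alphaC) : 0 < C.betaC := by
  have hαOm : 0 < C.alphaOm := hα.trans_le (min_le_left _ _)
  have hgain : 0 < C.betaOm * specNorm C.Sstar :=
    calc 0 < C.alphaOm * normInf C.Sstar := mul_pos hαOm (normInf_pos C.hSne)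
      _ ≤ normInf (proj C.Om (C.Hop C.Sstar)) := C.alphaOm_mul_le C.Sstar_mem_Om
      _ ≤ normInf (C.Hop C.Sstar) := normInf_proj_OmegaS_le C.hSsymm _
      _ ≤ specNorm (C.Hop C.Sstar) := normInf_le_specNorm _
      _ ≤ C.betaOm * specNorm C.Sstar := C.specNorm_Hop_le C.Sstar_mem_Om
  exact (pos_of_mul_pos_left hgain (specNorm_nonneg _)).trans_le (le_max_left _ _)

variable {T' : Submodule ℝ (Mat d)} {M N : Mat d}

lemma alphaC_mul_normInf_sub_le (hr : 1 ≤ r) (hT' : IsTangentSpace d r T')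
    (hrho : rho C.Tt T' ≤ C.xiT / 2) (hβ : 0 ≤ C.betaC) (hM : M ∈ C.Om) (hN : N ∈ T') :
    C.alphaC * normInf M - 2 * C.betaC * C.xiT * specNorm N ≤
      normInf (proj C.Om (C.Hop (M + N))) := by
  have hgain : C.alphaC * normInf M ≤ normInf (proj C.Om (C.Hop M)) :=
    (mul_le_mul_of_nonneg_right (min_le_left _ _) (normInf_nonneg M)).trans
      (C.alphaOm_mul_le hM)
  have hcross : normInf (proj C.Om (C.Hop N)) ≤ 2 * C.betaC * C.xiT * specNorm N :=
    calc normInf (proj C.Om (C.Hop N))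
        ≤ normInf (C.Hop N) := normInf_proj_OmegaS_le C.hSsymm _
      _ ≤ C.betaT * normInf N := C.normInf_Hop_le hT' hrho hN
      _ ≤ C.betaC * (2 * C.xiT * specNorm N) :=
          mul_le_mul (le_max_right _ _)
            (normInf_le_two_xi_mul (C.xiT_pos hr).le (C.xiT_le_one hr) hrho hN)
            (normInf_nonneg N) hβ
      _ = 2 * C.betaC * C.xiT * specNorm N := by ring
  rw [Hop_add, proj_add]
  linarith [normInf_sub_le_normInf_add (proj C.Om (C.Hop M)) (proj C.Om (C.Hop N))]

lemma alphaC_mul_specNorm_sub_le (hT' : IsTangentSpace d r T')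
    (hrho : rho C.Tt T' ≤ C.xiT / 2) (hβ : 0 ≤ C.betaC) (hM : M ∈ C.Om) (hN : N ∈ T') :
    C.alphaC * specNorm N - 2 * C.betaC * C.muOm * normInf M ≤
      specNorm (proj T' (C.Hop (M + N))) := by
  have hgain : C.alphaC * specNorm N ≤ specNorm (proj T' (C.Hop N)) :=
    (mul_le_mul_of_nonneg_right (min_le_right _ _) (specNorm_nonneg N)).trans
      (C.alphaT_mul_le hT' hrho hN)
  obtain ⟨U', -, hU', -, -, rfl⟩ := hT'
  have hcross : specNorm (proj (TSpace U') (C.Hop M)) ≤ 2 * C.betaC * C.muOm * normInf M :=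
    calc specNorm (proj (TSpace U') (C.Hop M)) ≤ 2 * specNorm (C.Hop M) := by
          rw [proj_TSpace hU']; exact specNorm_projTSpace_le hU' _
      _ ≤ 2 * (C.betaC * (C.muOm * normInf M)) := by
          gcongr
          exact (C.specNorm_Hop_le hM).trans (mul_le_mul (le_max_left _ _)
            (specNorm_le_mu_mul hM) (specNorm_nonneg M) hβ)
      _ = 2 * C.betaC * C.muOm * normInf M := by ring
  rw [Hop_add, proj_add, add_comm]
  linarith [specNorm_sub_le_specNorm_add (proj (TSpace U') (C.Hop N))
    (proj (TSpace U') (C.Hop M))]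

end Setup

theorem coupled_stability_minimum_gain_general (d r : ℕ) (hr : 1 ≤ r)
    (C : Setup d r) (ν γ : ℝ) (hstab : C.Stability ν)
    (hγ : γ ∈ Set.Icc (C.gammaMin ν) (C.gammaMax ν)) :
    ∀ T' : Submodule ℝ (Mat d), IsTangentSpace d r T' → rho C.Tt T' ≤ C.xiT / 2 →
      ∀ M N : Mat d, M ∈ C.Om → N ∈ T' →
        C.alphaC / 2 * ganorm γ M N ≤
          ganorm γ (proj C.Om (C.Hop (M + N))) (proj T' (C.Hop (M + N))) := by
  obtain ⟨hα, hν, hν2, -⟩ := hstab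
  intro T' hT' hrho M N hM hN
  have hβ := C.betaC_pos hα
  have hξ := C.xiT_pos hr
  have hμ := C.muOm_pos
  obtain ⟨hγ0, hξγ, hμγ⟩ := coupling_bounds_of_mem_Icc hα hβ hξ hμ hν hν2 hγ
  exact half_mul_max_le_max hγ0 (by positivity) (by positivity) (normInf_nonneg M)
    (specNorm_nonneg N) (by linarith) (by linarith)
    (C.alphaC_mul_normInf_sub_le hr hT' hrho hβ.le hM hN)
    (C.alphaC_mul_specNorm_sub_le hT' hrho hβ.le hM hN)

/-- Proposition 1(a), coupled stability, minimum gain: under the stability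
and γ-feasibility assumptions, for `γ ∈ [γ_min, γ_max]` and every tangent space `T'`
with `ρ(T,T') ≤ ξ(T)/2`, the minimum gain of `H*` on `Ω ⊕ T'` is bounded below:
`‖P_Y D H*(M+N)‖_γ ≥ (α/2)‖(M,N)‖_γ` for all `(M,N) ∈ Ω × T'`. -/
theorem coupled_stability_minimum_gain (d r : ℕ) (hd : 1 ≤ d) (hr : 1 ≤ r)
    (C : Setup d r) (ν γ : ℝ) (hstab : C.Stability ν) (hfeas : C.GammaFeasible ν)
    (hγ : γ ∈ Set.Icc (C.gammaMin ν) (C.gammaMax ν)) :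
    ∀ T' : Submodule ℝ (Mat d), IsTangentSpace d r T' → rho C.Tt T' ≤ C.xiT / 2 →
      ∀ M N : Mat d, M ∈ C.Om → N ∈ T' →
        C.alphaC / 2 * ganorm γ M N ≤
          ganorm γ (proj C.Om (C.Hop (M + N))) (proj T' (C.Hop (M + N))) :=
  coupled_stability_minimum_gain_general d r hr C ν γ hstab hγ

end IsingSL
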